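/- For s ∈ (0, π̂/2), the function G_2(s) = (1 + |tan_p s|^p)(s(2 + (1-p)|tan_p s|^p - p·s·|tan_p s|^{p-1}) - tan_p s) - tan_p s is strictly negative. -/

import Mathlib

open Real

noncomputable def plPow (p u : ℝ) : ℝ := |u| ^ (p - 2) * u

noncomputable def pihat (p : ℝ) : ℝ := 2 * ∫ t in (0:ℝ)..1, (1 - t ^ p) ^ (-(1 / p))

/-!
Let `T = S / S'`. Conservation of `|S|^p + |S'|^p = 1` gives `S z = 1` at the first zero `z`
of `S'`, and the substitution `u = S x` in `∫₀¹ (1 - u^p)^(-1/p) du = π̂/2` shows `z = π̂/2`.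
Hence `S' > 0` on `[0, π̂/2)`, where `T' = 1 + |T|^p` and `T 0 = 0`. Both `T s - s` and
`Φ(s) = p s (1 + T^p) - (2 - p) T - (1 - p) T^(p+1)` vanish at `0` and have positive derivative,
and `-G₂(s) = s T^(p-1) Φ(s) + (2 + T^p)(T - s)`.
-/

open Set Filter Topology MeasureTheory

lemma strictMonoOn_Icc_of_hasDerivAt_pos {f f' : ℝ → ℝ} {a b : ℝ}
    (hf : ∀ y ∈ Icc a b, HasDerivAt f (f' y) y) (hf' : ∀ y ∈ Ioo a b, 0 < f' y) :
    StrictMonoOn f (Icc a b) := by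
  refine strictMonoOn_of_deriv_pos (convex_Icc a b)
    (fun y hy => (hf y hy).continuousAt.continuousWithinAt) fun y hy => ?_
  rw [interior_Icc] at hy
  rw [(hf y (Ioo_subset_Icc_self hy)).deriv]
  exact hf' y hy

lemma pos_of_hasDerivAt_of_deriv_pos {f f' : ℝ → ℝ} {s : ℝ} (hs : 0 < s) (h0 : f 0 = 0)
    (hf : ∀ y ∈ Icc 0 s, HasDerivAt f (f' y) y) (hf' : ∀ y ∈ Ioo 0 s, 0 < f' y) : 0 < f s :=
  h0 ▸ strictMonoOn_Icc_of_hasDerivAt_pos hf hf' ⟨le_rfl, hs.le⟩ ⟨hs.le, le_rfl⟩ hs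

section plPow

variable {p q : ℝ}

lemma plPow_of_pos {u : ℝ} (hu : 0 < u) : plPow p u = u ^ (p - 1) := by
  rw [plPow, abs_of_pos hu, ← rpow_add_one hu.ne']
  ring_nf

lemma abs_plPow (hp : p ≠ 1) (u : ℝ) : |plPow p u| = |u| ^ (p - 1) := by
  rcases eq_or_ne u 0 with rfl | hu
  · simp [plPow, zero_rpow (sub_ne_zero.2 hp)]
  · rw [plPow, abs_mul, abs_of_nonneg (rpow_nonneg (abs_nonneg u) _),
      ← rpow_add_one (abs_ne_zero.2 hu)]
    ring_nf

lemma plPow_mul_self (hp : p ≠ 0) (u : ℝ) : plPow p u * u = |u| ^ p := by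
  rcases eq_or_ne u 0 with rfl | hu
  · simp [plPow, zero_rpow hp]
  · rw [plPow, mul_assoc, ← abs_mul_abs_self, ← mul_assoc, ← rpow_add_one (abs_ne_zero.2 hu),
      ← rpow_add_one (abs_ne_zero.2 hu)]
    ring_nf

lemma plPow_plPow (h : p.HolderConjugate q) (u : ℝ) : plPow q (plPow p u) = u := by
  rcases eq_or_ne u 0 with rfl | hu
  · simp [plPow]
  · have hexp : (p - 1) * (q - 2) + (p - 2) = 0 := by linear_combination h.sub_one_mul_conj
    rw [plPow, abs_plPow h.lt.ne', plPow, ← rpow_mul (abs_nonneg u), ← mul_assoc,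
      ← rpow_add (abs_pos.2 hu), hexp, rpow_zero, one_mul]

lemma hasDerivAt_abs_rpow_plPow (hp : 1 < p) (x : ℝ) :
    HasDerivAt (fun u => |u| ^ p) (p * plPow p x) x := by
  rw [plPow, ← mul_assoc]
  exact hasDerivAt_abs_rpow x hp

lemma continuous_plPow (hp : 1 < p) : Continuous (plPow p) := by
  have hderiv : deriv (fun u : ℝ => ‖u‖ ^ p) = fun u => p * plPow p u := by
    funext u
    simpa only [Real.norm_eq_abs] using (hasDerivAt_abs_rpow_plPow hp u).deriv
  have hc := (contDiff_norm_rpow (E := ℝ) hp).continuous_deriv le_rfl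
  rw [hderiv] at hc
  simpa [(by linarith : p ≠ 0)] using hc.div_const p

lemma hasDerivAt_plPow_of_pos {u : ℝ} (hu : 0 < u) :
    HasDerivAt (plPow p) ((p - 1) * u ^ (p - 2)) u := by
  have h := hasDerivAt_rpow_const (x := u) (p := p - 1) (Or.inl hu.ne')
  rw [show p - 1 - 1 = p - 2 by ring] at h
  refine h.congr_of_eventuallyEq ?_
  filter_upwards [Ioi_mem_nhds hu] with v hv using plPow_of_pos hv

end plPow

/-- `plPow p` is `φ_p(u) = |u|^(p-2) u`, so `S` is `sin_p` with derivative `S'`. -/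
structure IsSinP (p : ℝ) (S S' : ℝ → ℝ) : Prop where
  hasDerivAt : ∀ x, HasDerivAt S (S' x) x
  hasDerivAt_plPow_deriv : ∀ x, HasDerivAt (fun s => plPow p (S' s)) (-(p - 1) * plPow p (S x)) x
  map_zero : S 0 = 0
  deriv_zero : S' 0 = 1

namespace IsSinP

variable {p : ℝ} {S S' : ℝ → ℝ}

lemma continuous_deriv (h : IsSinP p S S') (hp : 1 < p) : Continuous S' := by
  have hq : p.HolderConjugate p.conjExponent := .conjExponent hp
  have hV : Continuous fun x => plPow p (S' x) :=
    continuous_iff_continuousAt.2 fun x => (h.hasDerivAt_plPow_deriv x).continuousAt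
  simpa only [Function.comp_def, plPow_plPow hq] using (continuous_plPow hq.symm.lt).comp hV

lemma abs_rpow_add_abs_deriv_rpow (h : IsSinP p S S') (hp : 1 < p) (x : ℝ) :
    |S x| ^ p + |S' x| ^ p = 1 := by
  set q := p.conjExponent
  have hq : p.HolderConjugate q := .conjExponent hp
  have habs : ∀ y, |plPow p (S' y)| ^ q = |S' y| ^ p := fun y => by
    rw [abs_plPow hp.ne', ← rpow_mul (abs_nonneg _), hq.sub_one_mul_conj]
  have hE : ∀ y, HasDerivAt (fun x => |S x| ^ p + |plPow p (S' x)| ^ q) 0 y := fun y => by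
    have hS := (hasDerivAt_abs_rpow_plPow hp (S y)).comp y (h.hasDerivAt y)
    have hV := (hasDerivAt_abs_rpow_plPow hq.symm.lt _).comp y (h.hasDerivAt_plPow_deriv y)
    refine (hS.add hV).congr_deriv ?_
    rw [plPow_plPow hq]
    linear_combination -(plPow p (S y) * S' y) * hq.sub_one_mul_conj
  have hconst := is_const_of_deriv_eq_zero (fun y => (hE y).differentiableAt)
    (fun y => (hE y).deriv) x 0
  rw [habs, habs, h.map_zero, h.deriv_zero] at hconst
  simpa [zero_rpow (by linarith : p ≠ 0)] using hconst

lemma hasDerivAt_deriv (h : IsSinP p S S') (hp : 1 < p) {y : ℝ} (hy : 0 < S' y) :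
    HasDerivAt S' (-(S' y ^ (2 - p) * plPow p (S y))) y := by
  set q := p.conjExponent
  have hq : p.HolderConjugate q := .conjExponent hp
  have hV : plPow p (S' y) = S' y ^ (p - 1) := plPow_of_pos hy
  have hder := (hasDerivAt_plPow_of_pos (p := q) (hV ▸ rpow_pos_of_pos hy _)).comp y
    (h.hasDerivAt_plPow_deriv y)
  simp only [Function.comp_def, plPow_plPow hq] at hder
  refine hder.congr_deriv ?_
  have hexp : (p - 1) * (q - 2) = 2 - p := by linear_combination hq.sub_one_mul_conj
  rw [hV, ← rpow_mul hy.le, hexp]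
  linear_combination -(S' y ^ (2 - p) * plPow p (S y)) * hq.sub_one_mul_conj

lemma hasDerivAt_tan (h : IsSinP p S S') (hp : 1 < p) {y : ℝ} (hy : 0 < S' y) :
    HasDerivAt (fun x => S x / S' x) (1 + |S y / S' y| ^ p) y := by
  refine ((h.hasDerivAt y).div (h.hasDerivAt_deriv hp hy) hy.ne').congr_deriv ?_
  rw [abs_div, abs_of_pos hy, div_rpow (abs_nonneg _) hy.le, ← plPow_mul_self (by linarith),
    rpow_sub hy, rpow_two]
  field_simp
  ring

lemma eq_pihat_div_two_of_deriv_eq_zero (h : IsSinP p S S') (hp : 1 < p) {z : ℝ} (hz : 0 ≤ z)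
    (hpos : ∀ y ∈ Ico 0 z, 0 < S' y) (hzero : S' z = 0) : z = pihat p / 2 := by
  have hp0 : 0 < p := by linarith
  have hmono : StrictMonoOn S (Icc 0 z) :=
    strictMonoOn_Icc_of_hasDerivAt_pos (fun y _ => h.hasDerivAt y)
      fun y hy => hpos y ⟨hy.1.le, hy.2⟩
  have hSz : S z = 1 := by
    have hz0 : 0 < z := hz.lt_of_ne (by rintro rfl; simp [h.deriv_zero] at hzero)
    have hSz0 : 0 < S z := h.map_zero ▸ hmono ⟨le_rfl, hz⟩ ⟨hz, le_rfl⟩ hz0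
    have he := h.abs_rpow_add_abs_deriv_rpow hp z
    rw [hzero, abs_zero, zero_rpow hp0.ne', add_zero, abs_of_pos hSz0] at he
    rw [← rpow_rpow_inv hSz0.le hp0.ne', he, one_rpow]
  have himage : S '' Icc 0 z = Icc 0 1 := by
    have := ContinuousOn.image_Icc_of_monotoneOn hz
      (fun y _ => (h.hasDerivAt y).continuousAt.continuousWithinAt) hmono.monotoneOn
    rwa [h.map_zero, hSz] at this
  -- Substituting `u = S x` through the image of `S`: no continuity of the integrand, which
  -- blows up at `u = 1`, is needed.
  have hsubst := integral_image_eq_integral_abs_deriv_smul measurableSet_Icc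
    (fun x _ => (h.hasDerivAt x).hasDerivWithinAt) hmono.injOn
    (fun u => (1 - u ^ p) ^ (-(1 / p)))
  have hone : EqOn (fun x => |S' x| • (1 - S x ^ p) ^ (-(1 / p))) 1 (Ico 0 z) := by
    intro x hx
    have hS' := hpos x hx
    have hS : 0 ≤ S x := h.map_zero ▸ hmono.monotoneOn ⟨le_rfl, hz⟩ ⟨hx.1, hx.2.le⟩ hx.1
    have he := h.abs_rpow_add_abs_deriv_rpow hp x
    rw [abs_of_nonneg hS, abs_of_pos hS'] at he
    show |S' x| * (1 - S x ^ p) ^ (-(1 / p)) = 1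
    rw [abs_of_pos hS', show 1 - S x ^ p = S' x ^ p by linarith,
      ← rpow_mul hS'.le, mul_neg, mul_one_div_cancel hp0.ne', rpow_neg_one, mul_inv_cancel₀ hS'.ne']
  rw [himage, integral_Icc_eq_integral_Ioc, ← intervalIntegral.integral_of_le zero_le_one,
    integral_Icc_eq_integral_Ico, setIntegral_congr_fun measurableSet_Ico hone] at hsubst
  simp only [Pi.one_apply, integral_const, MeasurableSet.univ, measureReal_restrict_apply,
    univ_inter, Real.volume_real_Ico_of_le hz, smul_eq_mul, mul_one] at hsubst
  rw [pihat, hsubst]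
  ring

lemma deriv_pos (h : IsSinP p S S') (hp : 1 < p) {x : ℝ} (hx : x ∈ Ico 0 (pihat p / 2)) :
    0 < S' x := by
  by_contra! hneg
  set A := {y ∈ Icc 0 x | S' y ≤ 0}
  have hA : IsClosed A := isClosed_Icc.inter (isClosed_le (h.continuous_deriv hp) continuous_const)
  have hbdd : BddBelow A := ⟨0, fun y hy => hy.1.1⟩
  have hzA : sInf A ∈ A := hA.csInf_mem ⟨x, ⟨hx.1, le_rfl⟩, hneg⟩ hbdd
  have hbefore : ∀ y ∈ Ico 0 (sInf A), 0 < S' y := fun y hy => by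
    by_contra! hy'
    exact (csInf_le hbdd ⟨⟨hy.1, hy.2.le.trans hzA.1.2⟩, hy'⟩).not_gt hy.2
  have hz0 : 0 < sInf A :=
    hzA.1.1.lt_of_ne fun h0 => by linarith [h0 ▸ h.deriv_zero, hzA.2]
  have hzero : S' (sInf A) = 0 := by
    refine le_antisymm hzA.2 (ge_of_tendsto ((h.continuous_deriv hp).continuousAt.tendsto.mono_left
      (nhdsWithin_le_nhds (s := Iio (sInf A)))) ?_)
    filter_upwards [Ioo_mem_nhdsLT hz0] with y hy using (hbefore y ⟨hy.1.le, hy.2⟩).le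
  have := h.eq_pihat_div_two_of_deriv_eq_zero hp hzA.1.1 hbefore hzero
  linarith [hzA.1.2, hx.2]

end IsSinP

section Riccati

variable {p s : ℝ} {T : ℝ → ℝ}

lemma pos_of_hasDerivAt_one_add_abs_rpow (hT0 : T 0 = 0)
    (hT : ∀ y ∈ Icc 0 s, HasDerivAt T (1 + |T y| ^ p) y) {y : ℝ} (hy : y ∈ Ioc 0 s) : 0 < T y :=
  pos_of_hasDerivAt_of_deriv_pos hy.1 hT0 (fun w hw => hT w ⟨hw.1, hw.2.trans hy.2⟩)
    fun w _ => by positivity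

lemma lt_of_hasDerivAt_one_add_abs_rpow (hs : 0 < s) (hT0 : T 0 = 0)
    (hT : ∀ y ∈ Icc 0 s, HasDerivAt T (1 + |T y| ^ p) y) : s < T s := by
  have hpos : 0 < T s - s := by
    refine pos_of_hasDerivAt_of_deriv_pos (f := fun w => T w - w) hs (by simp [hT0])
      (fun y hy => ((hT y hy).sub (hasDerivAt_id y)).congr_deriv (add_sub_cancel_left _ _))
      fun y hy => ?_
    exact rpow_pos_of_pos (abs_pos.2 (pos_of_hasDerivAt_one_add_abs_rpow hT0 hT
      ⟨hy.1, hy.2.le⟩).ne') p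
  linarith

lemma phi_pos_of_hasDerivAt_one_add_abs_rpow (hp : 1 < p) (hs : 0 < s) (hT0 : T 0 = 0)
    (hT : ∀ y ∈ Icc 0 s, HasDerivAt T (1 + |T y| ^ p) y) :
    0 < p * s * (1 + |T s| ^ p) - (2 - p) * T s - (1 - p) * (T s * |T s| ^ p) := by
  have hp0 : p ≠ 0 := by linarith
  refine pos_of_hasDerivAt_of_deriv_pos
    (f := fun w => p * w * (1 + |T w| ^ p) - (2 - p) * T w - (1 - p) * (T w * |T w| ^ p)) hs
    (by simp [hT0, zero_rpow hp0])
    (f' := fun y => (1 + |T y| ^ p) *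
      (2 * (p - 1) + p ^ 2 * y * plPow p (T y) + (p - 1) * (p + 1) * |T y| ^ p))
    (fun y hy => ?_) fun y hy => ?_
  · have hm := (hasDerivAt_abs_rpow_plPow hp (T y)).comp y (hT y hy)
    refine ((((hasDerivAt_id y).const_mul p).mul (hm.const_add 1)).sub ((hT y hy).const_mul (2 - p))
      |>.sub (((hT y hy).mul hm).const_mul (1 - p))).congr_deriv ?_
    simp only [Function.comp_apply, id]
    linear_combination (p - 1) * p * (1 + |T y| ^ p) * plPow_mul_self hp0 (T y)
  · have hTy := pos_of_hasDerivAt_one_add_abs_rpow hT0 hT ⟨hy.1, hy.2.le⟩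
    have hP : 0 < plPow p (T y) := plPow_of_pos hTy ▸ rpow_pos_of_pos hTy _
    have hm : 0 < |T y| ^ p := rpow_pos_of_pos (abs_pos.2 hTy.ne') p
    have h1 : 0 < p ^ 2 * y * plPow p (T y) := mul_pos (mul_pos (by positivity) hy.1) hP
    have h2 : 0 < (p - 1) * (p + 1) * |T y| ^ p := mul_pos (mul_pos (by linarith) (by linarith)) hm
    exact mul_pos (by positivity) (by linarith)

end Riccati

lemma G2_neg_of_phi_pos {p s t : ℝ} (hs : 0 < s) (hst : s < t)
    (hΦ : 0 < p * s * (1 + t ^ p) - (2 - p) * t - (1 - p) * (t * t ^ p)) :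
    (1 + t ^ p) * (s * (2 + (1 - p) * t ^ p - p * s * t ^ (p - 1)) - t) - t < 0 := by
  have ht : 0 < t := hs.trans hst
  have hR : t ^ (p - 1) * t = t ^ p := by rw [← rpow_add_one ht.ne']; ring_nf
  have h1 := mul_pos (mul_pos hs (rpow_pos_of_pos ht (p - 1))) hΦ
  have h2 := mul_pos (by positivity : (0 : ℝ) < 2 + t ^ p) (sub_pos.2 hst)
  linear_combination h1 + h2 - (s * (2 - p) + s * (1 - p) * t ^ p) * hR

theorem G2_neg_general (p : ℝ) (hp : 1 < p) (S S' : ℝ → ℝ)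
    (hd : ∀ x, HasDerivAt S (S' x) x)
    (hode : ∀ x, HasDerivAt (fun s => plPow p (S' s)) (-(p - 1) * plPow p (S x)) x)
    (h0 : S 0 = 0) (h0' : S' 0 = 1) :
    ∀ s ∈ Set.Ioo 0 (pihat p / 2),
      (1 + |S s / S' s| ^ p) *
          (s * (2 + (1 - p) * |S s / S' s| ^ p - p * s * |S s / S' s| ^ (p - 1)) -
            S s / S' s) -
        S s / S' s < 0 := by
  rintro s ⟨hs0, hs⟩
  have hsin : IsSinP p S S' := ⟨hd, hode, h0, h0'⟩
  have hT0 : S 0 / S' 0 = 0 := by simp [h0]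
  have hT : ∀ y ∈ Icc 0 s, HasDerivAt (fun x => S x / S' x) (1 + |S y / S' y| ^ p) y :=
    fun y hy => hsin.hasDerivAt_tan hp (hsin.deriv_pos hp ⟨hy.1, hy.2.trans_lt hs⟩)
  have htan := pos_of_hasDerivAt_one_add_abs_rpow hT0 hT ⟨hs0, le_rfl⟩
  have hΦ := phi_pos_of_hasDerivAt_one_add_abs_rpow hp hs0 hT0 hT
  rw [abs_of_pos htan] at hΦ ⊢
  exact G2_neg_of_phi_pos hs0 (lt_of_hasDerivAt_one_add_abs_rpow hs0 hT0 hT) hΦ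

/-- for `s ∈ (0, π̂/2)`, with `tan_p = S_p/S_p'`,
`G₂(s) = (1+|tan_p s|^p)(s(2+(1-p)|tan_p s|^p - p s |tan_p s|^{p-1}) - tan_p s) - tan_p s < 0`. -/
theorem G2_neg (p : ℝ) (hp : 1 < p) (S S' : ℝ → ℝ)
    (hd : ∀ x, HasDerivAt S (S' x) x)
    (hode : ∀ x, HasDerivAt (fun s => plPow p (S' s)) (-(p - 1) * plPow p (S x)) x)
    (h0 : S 0 = 0) (h0' : S' 0 = 1)
    (hpos : ∀ x ∈ Set.Ioo 0 (pihat p), 0 < S x) (hz : S (pihat p) = 0) :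
    ∀ s ∈ Set.Ioo 0 (pihat p / 2),
      (1 + |S s / S' s| ^ p) *
          (s * (2 + (1 - p) * |S s / S' s| ^ p - p * s * |S s / S' s| ^ (p - 1)) -
            S s / S' s) -
        S s / S' s < 0 :=
  G2_neg_general p hp S S' hd hode h0 h0'
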